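/- arXiv:math/0604180 — 4 statements merged into one kernel-verified Lean document; each statement's English description precedes it below -/
import Mathlib

section
/- Fundamental theorem of Hopf modules for Hopf monads: let T be a right Hopf monad on a right autonomous category, and let (M,r,ρ) be a right Hopf T-module such that the pair (ρ, id_M ⊗ η_1) admits an equalizer i : M^{coT} → M which is preserved by T. Then r∘T(i) : (T(M^{coT}), μ_{M^{coT}}, T_2(M^{coT},1)) → (M,r,ρ) is an isomorphism of right Hopf T-modules. -/
open CategoryTheory MonoidalCategory

namespace HopfMonadPaper

variable {C : Type*} [Category C] [MonoidalCategory C]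

/-- A comonoidal (oplax monoidal) structure on an endofunctor `T`,
with coproduct `δ X Y : T(X ⊗ Y) ⟶ T(X) ⊗ T(Y)` and counit `ε : T(𝟙) ⟶ 𝟙`. -/
structure Comonoidal (T : C ⥤ C) where
  δ : ∀ X Y : C, T.obj (X ⊗ Y) ⟶ T.obj X ⊗ T.obj Y
  ε : T.obj (𝟙_ C) ⟶ 𝟙_ C
  δ_natural : ∀ {X X' Y Y' : C} (f : X ⟶ X') (g : Y ⟶ Y'),
    T.map (f ⊗ₘ g) ≫ δ X' Y' = δ X Y ≫ (T.map f ⊗ₘ T.map g)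
  coassoc : ∀ X Y Z : C,
    δ (X ⊗ Y) Z ≫ (δ X Y ⊗ₘ 𝟙 (T.obj Z)) ≫ (α_ (T.obj X) (T.obj Y) (T.obj Z)).hom
      = T.map (α_ X Y Z).hom ≫ δ X (Y ⊗ Z) ≫ (𝟙 (T.obj X) ⊗ₘ δ Y Z)
  counit_left : ∀ X : C,
    δ (𝟙_ C) X ≫ (ε ⊗ₘ 𝟙 (T.obj X)) ≫ (λ_ (T.obj X)).hom = T.map (λ_ X).hom
  counit_right : ∀ X : C,
    δ X (𝟙_ C) ≫ (𝟙 (T.obj X) ⊗ₘ ε) ≫ (ρ_ (T.obj X)).hom = T.map (ρ_ X).hom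

/-- The bimonad axioms: the product and unit of the monad are comonoidal. -/
structure IsBimonad (T : Monad C) (Q : Comonoidal T.toFunctor) : Prop where
  mu_δ : ∀ X Y : C, T.μ.app (X ⊗ Y) ≫ Q.δ X Y
    = T.map (Q.δ X Y) ≫ Q.δ (T.obj X) (T.obj Y) ≫ (T.μ.app X ⊗ₘ T.μ.app Y)
  mu_ε : T.μ.app (𝟙_ C) ≫ Q.ε = T.map Q.ε ≫ Q.ε
  eta_δ : ∀ X Y : C, T.η.app (X ⊗ Y) ≫ Q.δ X Y = T.η.app X ⊗ₘ T.η.app Y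
  eta_ε : T.η.app (𝟙_ C) ≫ Q.ε = 𝟙 (𝟙_ C)

/-- A choice of left duals: `d X = ˡX` with evaluation `ev X : ˡX ⊗ X ⟶ 𝟙`
and coevaluation `coev X : 𝟙 ⟶ X ⊗ ˡX`, satisfying the triangle identities. -/
structure LeftDualData (C : Type*) [Category C] [MonoidalCategory C] where
  d : C → C
  ev : ∀ X : C, d X ⊗ X ⟶ 𝟙_ C
  coev : ∀ X : C, 𝟙_ C ⟶ X ⊗ d X
  tri1 : ∀ X : C, (ρ_ (d X)).inv ≫ (𝟙 (d X) ⊗ₘ coev X) ≫ (α_ (d X) X (d X)).inv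
    ≫ (ev X ⊗ₘ 𝟙 (d X)) ≫ (λ_ (d X)).hom = 𝟙 (d X)
  tri2 : ∀ X : C, (λ_ X).inv ≫ (coev X ⊗ₘ 𝟙 X) ≫ (α_ X (d X) X).hom
    ≫ (𝟙 X ⊗ₘ ev X) ≫ (ρ_ X).hom = 𝟙 X

/-- Left transpose (left dual) of a morphism. -/
def LeftDualData.tr (L : LeftDualData C) {X Y : C} (f : X ⟶ Y) : L.d Y ⟶ L.d X :=
  (ρ_ (L.d Y)).inv ≫ (𝟙 (L.d Y) ⊗ₘ L.coev X) ≫ (𝟙 (L.d Y) ⊗ₘ (f ⊗ₘ 𝟙 (L.d X)))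
    ≫ (α_ (L.d Y) Y (L.d X)).inv ≫ (L.ev Y ⊗ₘ 𝟙 (L.d X)) ≫ (λ_ (L.d X)).hom

/-- A choice of right duals: `d X = ʳX` with evaluation `ev X : X ⊗ ʳX ⟶ 𝟙`
and coevaluation `coev X : 𝟙 ⟶ ʳX ⊗ X`, satisfying the triangle identities. -/
structure RightDualData (C : Type*) [Category C] [MonoidalCategory C] where
  d : C → C
  ev : ∀ X : C, X ⊗ d X ⟶ 𝟙_ C
  coev : ∀ X : C, 𝟙_ C ⟶ d X ⊗ X
  tri1 : ∀ X : C, (ρ_ X).inv ≫ (𝟙 X ⊗ₘ coev X) ≫ (α_ X (d X) X).inv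
    ≫ (ev X ⊗ₘ 𝟙 X) ≫ (λ_ X).hom = 𝟙 X
  tri2 : ∀ X : C, (λ_ (d X)).inv ≫ (coev X ⊗ₘ 𝟙 (d X)) ≫ (α_ (d X) X (d X)).hom
    ≫ (𝟙 (d X) ⊗ₘ ev X) ≫ (ρ_ (d X)).hom = 𝟙 (d X)

/-- Right transpose (right dual) of a morphism. -/
def RightDualData.tr (R : RightDualData C) {X Y : C} (f : X ⟶ Y) : R.d Y ⟶ R.d X :=
  (λ_ (R.d Y)).inv ≫ (R.coev X ⊗ₘ 𝟙 (R.d Y)) ≫ (α_ (R.d X) X (R.d Y)).hom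
    ≫ (𝟙 (R.d X) ⊗ₘ (f ⊗ₘ 𝟙 (R.d Y))) ≫ (𝟙 (R.d X) ⊗ₘ R.ev Y) ≫ (ρ_ (R.d X)).hom

/-- The axioms for a left antipode `s X : T(ˡT(X)) ⟶ ˡX` of a bimonad. -/
structure IsLeftAntipode (T : Monad C) (Q : Comonoidal T.toFunctor) (L : LeftDualData C)
    (s : ∀ X : C, T.obj (L.d (T.obj X)) ⟶ L.d X) : Prop where
  natural : ∀ {X Y : C} (f : X ⟶ Y),
    T.map (L.tr (T.map f)) ≫ s X = s Y ≫ L.tr f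
  lant1 : ∀ X : C,
    T.map (L.tr (T.η.app X) ⊗ₘ 𝟙 X) ≫ T.map (L.ev X) ≫ Q.ε
      = Q.δ (L.d (T.obj X)) X
        ≫ ((T.map (L.tr (T.μ.app X)) ≫ s (T.obj X)) ⊗ₘ 𝟙 (T.obj X)) ≫ L.ev (T.obj X)
  lant2 : ∀ X : C,
    Q.ε ≫ L.coev X ≫ (T.η.app X ⊗ₘ 𝟙 (L.d X))
      = T.map (L.coev (T.obj X)) ≫ Q.δ (T.obj X) (L.d (T.obj X)) ≫ (T.μ.app X ⊗ₘ s X)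

/-- The axioms for a right antipode `s X : T(ʳT(X)) ⟶ ʳX` of a bimonad. -/
structure IsRightAntipode (T : Monad C) (Q : Comonoidal T.toFunctor) (R : RightDualData C)
    (s : ∀ X : C, T.obj (R.d (T.obj X)) ⟶ R.d X) : Prop where
  natural : ∀ {X Y : C} (f : X ⟶ Y),
    T.map (R.tr (T.map f)) ≫ s X = s Y ≫ R.tr f
  rant1 : ∀ X : C,
    T.map (𝟙 X ⊗ₘ R.tr (T.η.app X)) ≫ T.map (R.ev X) ≫ Q.ε
      = Q.δ X (R.d (T.obj X))
        ≫ (𝟙 (T.obj X) ⊗ₘ (T.map (R.tr (T.μ.app X)) ≫ s (T.obj X))) ≫ R.ev (T.obj X)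
  rant2 : ∀ X : C,
    Q.ε ≫ R.coev X ≫ (𝟙 (R.d X) ⊗ₘ T.η.app X)
      = T.map (R.coev (T.obj X)) ≫ Q.δ (R.d (T.obj X)) (T.obj X) ≫ (s X ⊗ₘ T.μ.app X)

/-- The canonical morphism `X ⟶ ʳ(ˡX)`. -/
def canRL (L : LeftDualData C) (R : RightDualData C) (X : C) : X ⟶ R.d (L.d X) :=
  (λ_ X).inv ≫ (R.coev (L.d X) ⊗ₘ 𝟙 X) ≫ (α_ (R.d (L.d X)) (L.d X) X).hom
    ≫ (𝟙 (R.d (L.d X)) ⊗ₘ L.ev X) ≫ (ρ_ (R.d (L.d X))).hom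

/-- The canonical morphism `ʳ(ˡX) ⟶ X`. -/
def canRLinv (L : LeftDualData C) (R : RightDualData C) (X : C) : R.d (L.d X) ⟶ X :=
  (λ_ (R.d (L.d X))).inv ≫ (L.coev X ⊗ₘ 𝟙 (R.d (L.d X)))
    ≫ (α_ X (L.d X) (R.d (L.d X))).hom ≫ (𝟙 X ⊗ₘ R.ev (L.d X)) ≫ (ρ_ X).hom

/-- The canonical morphism `X ⟶ ˡ(ʳX)`. -/
def canLR (L : LeftDualData C) (R : RightDualData C) (X : C) : X ⟶ L.d (R.d X) :=
  (ρ_ X).inv ≫ (𝟙 X ⊗ₘ L.coev (R.d X)) ≫ (α_ X (R.d X) (L.d (R.d X))).inv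
    ≫ (R.ev X ⊗ₘ 𝟙 (L.d (R.d X))) ≫ (λ_ (L.d (R.d X))).hom

/-- The canonical morphism `ˡ(ʳX) ⟶ X`. -/
def canLRinv (L : LeftDualData C) (R : RightDualData C) (X : C) : L.d (R.d X) ⟶ X :=
  (ρ_ (L.d (R.d X))).inv ≫ (𝟙 (L.d (R.d X)) ⊗ₘ R.coev X)
    ≫ (α_ (L.d (R.d X)) (R.d X) X).inv ≫ (L.ev (R.d X) ⊗ₘ 𝟙 X) ≫ (λ_ X).hom

/-- The comultiplication `T_2(𝟙,𝟙)` of the coalgebra `T(𝟙)`. -/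
def Delta1 (T : C ⥤ C) (Q : Comonoidal T) :
    T.obj (𝟙_ C) ⟶ T.obj (𝟙_ C) ⊗ T.obj (𝟙_ C) :=
  T.map (λ_ (𝟙_ C)).inv ≫ Q.δ (𝟙_ C) (𝟙_ C)

/-- A right `T`-comodule, i.e. a right comodule over the coalgebra `T(𝟙)`
(with comultiplication `T_2(𝟙,𝟙)` and counit `T_0`). -/
structure IsRightComodule (T : C ⥤ C) (Q : Comonoidal T)
    (M : C) (ρ : M ⟶ M ⊗ T.obj (𝟙_ C)) : Prop where
  coassoc : ρ ≫ (ρ ⊗ₘ 𝟙 (T.obj (𝟙_ C))) ≫ (α_ M (T.obj (𝟙_ C)) (T.obj (𝟙_ C))).hom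
    = ρ ≫ (𝟙 M ⊗ₘ Delta1 T Q)
  counit : ρ ≫ (𝟙 M ⊗ₘ Q.ε) ≫ (ρ_ M).hom = 𝟙 M

/-- A right Hopf `T`-module: a `T`-module and right `T`-comodule satisfying the
compatibility `ρ ∘ r = (r ⊗ μ_𝟙) ∘ T_2(M,T(𝟙)) ∘ T(ρ)`. -/
structure IsRightHopfModule (T : Monad C) (Q : Comonoidal T.toFunctor)
    (M : C) (r : T.obj M ⟶ M) (ρ : M ⟶ M ⊗ T.obj (𝟙_ C)) : Prop where
  unit : T.η.app M ≫ r = 𝟙 M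
  assoc : T.μ.app M ≫ r = T.map r ≫ r
  comodule : IsRightComodule T.toFunctor Q M ρ
  hopf : r ≫ ρ = T.map ρ ≫ Q.δ M (T.obj (𝟙_ C)) ≫ (r ⊗ₘ T.μ.app (𝟙_ C))

/-!
For a `T`-module `(B, F)` the map `galoisMap F = (F ⊗ id) ∘ T₂(B, 𝟙) ∘ T(ρ⁻¹) : TB ⟶ B ⊗ T𝟙`
is invertible. Its inverse `galoisInv F` is `T(F)` after a twisted comultiplication
`B ⊗ T𝟙 ⟶ TTB` built from the right antipode; the two antipode axioms give
`F ∘ galoisInv F = id ⊗ T₀` and `galoisInv μ_B ∘ T₂(B, 𝟙) ∘ T(ρ⁻¹) = T(η_B)`, from which both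
inverse laws follow. For a right Hopf module `(M, r, ρ)`, `κ = galoisInv r ∘ ρ : M ⟶ TM` is then a
section of `r`, and coassociativity of `ρ` shows that it equalizes `T(ρ)` and `T(id ⊗ η_𝟙)`.
Since `T(i)` is an equalizer, `κ` factors through it, and the factorization is inverse to
`r ∘ T(i)`: on `T(M^{coT})` the map `ρ ∘ r` is `galoisMap r`.
-/

namespace RightDualData

variable (R : RightDualData C)

abbrev exactPairing (X : C) : ExactPairing (R.d X) X where
  coevaluation' := R.coev X
  evaluation' := R.ev X
  coevaluation_evaluation' := by
    rw [← cancel_epi (ρ_ X).inv, ← cancel_mono (λ_ X).hom]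
    simpa using R.tri1 X
  evaluation_coevaluation' := by
    rw [← cancel_epi (λ_ (R.d X)).inv, ← cancel_mono (ρ_ (R.d X)).hom]
    simpa using R.tri2 X

abbrev hasLeftDual (X : C) : HasLeftDual X :=
  { leftDual := R.d X, exact := R.exactPairing X }

lemma tr_eq_leftAdjointMate {X Y : C} (f : X ⟶ Y) :
    R.tr f = @leftAdjointMate C _ _ X Y (R.hasLeftDual X) (R.hasLeftDual Y) f := by
  let := R.hasLeftDual X
  let := R.hasLeftDual Y
  dsimp [tr, leftAdjointMate]
  simp only [id_tensorHom, tensorHom_id]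
  rw [associator_naturality_middle_assoc]
  rfl

lemma coev_comp_whiskerLeft {X Y : C} (f : X ⟶ Y) :
    R.coev X ≫ (R.d X ◁ f) = R.coev Y ≫ (R.tr f ▷ Y) := by
  let := R.hasLeftDual X
  let := R.hasLeftDual Y
  rw [R.tr_eq_leftAdjointMate]
  exact (coevaluation_comp_leftAdjointMate f).symm

lemma whiskerRight_comp_ev {X Y : C} (f : X ⟶ Y) :
    (f ▷ R.d Y) ≫ R.ev Y = (X ◁ R.tr f) ≫ R.ev X := by
  let := R.hasLeftDual X
  let := R.hasLeftDual Y
  rw [R.tr_eq_leftAdjointMate]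
  exact (leftAdjointMate_comp_evaluation f).symm

def contract (B : C) {A Z : C} (γ : A ⟶ R.d B ⊗ Z) : B ⊗ A ⟶ Z :=
  (B ◁ γ) ≫ (α_ B (R.d B) Z).inv ≫ (R.ev B ▷ Z) ≫ (λ_ Z).hom

lemma contract_coev (B : C) : R.contract B (R.coev B) = (ρ_ B).hom := by
  simpa [contract, ← cancel_epi (ρ_ B).inv] using R.tri1 B

lemma contract_comp_whiskerLeft (B : C) {A Z Z' : C} (γ : A ⟶ R.d B ⊗ Z) (g : Z ⟶ Z') :
    R.contract B (γ ≫ (R.d B ◁ g)) = R.contract B γ ≫ g := by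
  simp only [contract, MonoidalCategory.whiskerLeft_comp, Category.assoc,
    associator_inv_naturality_right_assoc, whisker_exchange_assoc, leftUnitor_naturality]

lemma whiskerLeft_comp_contract (B : C) {A' A Z : C} (x : A' ⟶ A) (γ : A ⟶ R.d B ⊗ Z) :
    (B ◁ x) ≫ R.contract B γ = R.contract B (x ≫ γ) := by
  simp only [contract, MonoidalCategory.whiskerLeft_comp, Category.assoc]

lemma contract_whiskerRight_comp_associator (B : C) {A W V Z : C} (x : A ⟶ W ⊗ V)
    (γ : W ⟶ R.d B ⊗ Z) :
    R.contract B (x ≫ (γ ▷ V) ≫ (α_ (R.d B) Z V).hom)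
      = (B ◁ x) ≫ (α_ B W V).inv ≫ (R.contract B γ ▷ V) := by
  simp only [contract, MonoidalCategory.whiskerLeft_comp, Category.assoc, comp_whiskerRight]
  rw [← associator_inv_naturality_middle_assoc]
  monoidal

lemma whiskerRight_comp_contract {B B' A Z : C} (g : B ⟶ B') (γ : A ⟶ R.d B' ⊗ Z) :
    (g ▷ A) ≫ R.contract B' γ = R.contract B (γ ≫ (R.tr g ▷ Z)) := by
  simp only [contract, MonoidalCategory.whiskerLeft_comp, Category.assoc]
  rw [← whisker_exchange_assoc, associator_inv_naturality_left_assoc, ← comp_whiskerRight_assoc,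
    R.whiskerRight_comp_ev g, comp_whiskerRight_assoc, ← associator_inv_naturality_middle_assoc]

lemma contract_coev_comp_tr_whiskerRight {B X : C} (f : B ⟶ X) :
    R.contract B (R.coev X ≫ (R.tr f ▷ X)) = (ρ_ B).hom ≫ f := by
  rw [← R.coev_comp_whiskerLeft, R.contract_comp_whiskerLeft, R.contract_coev]

end RightDualData

namespace Comonoidal

variable {T : C ⥤ C} (Q : Comonoidal T)

lemma map_whiskerRight_δ {X X' : C} (f : X ⟶ X') (Y : C) :
    T.map (f ▷ Y) ≫ Q.δ X' Y = Q.δ X Y ≫ (T.map f ▷ T.obj Y) := by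
  simpa using Q.δ_natural f (𝟙 Y)

lemma map_whiskerLeft_δ (X : C) {Y Y' : C} (g : Y ⟶ Y') :
    T.map (X ◁ g) ≫ Q.δ X Y' = Q.δ X Y ≫ (T.obj X ◁ T.map g) := by
  simpa using Q.δ_natural (𝟙 X) g

lemma δ_whiskerLeft_δ (X Y Z : C) :
    Q.δ X (Y ⊗ Z) ≫ (T.obj X ◁ Q.δ Y Z)
      = T.map (α_ X Y Z).inv ≫ Q.δ (X ⊗ Y) Z ≫ (Q.δ X Y ▷ T.obj Z) ≫ (α_ _ _ _).hom := by
  have h := Q.coassoc X Y Z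
  simp only [id_tensorHom, tensorHom_id] at h
  rw [h, ← T.map_comp_assoc, Iso.inv_hom_id, T.map_id, Category.id_comp]

lemma δ_ε_whiskerRight (X : C) :
    Q.δ (𝟙_ C) X ≫ (Q.ε ▷ T.obj X) ≫ (λ_ (T.obj X)).hom = T.map (λ_ X).hom := by
  simpa using Q.counit_left X

lemma Delta1_ε_whiskerRight :
    Delta1 T Q ≫ (Q.ε ▷ T.obj (𝟙_ C)) = (λ_ (T.obj (𝟙_ C))).inv := by
  rw [← cancel_mono (λ_ (T.obj (𝟙_ C))).hom, Category.assoc, Delta1, Category.assoc,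
    Q.δ_ε_whiskerRight (𝟙_ C)]
  simp [← T.map_comp]

def coaction (B : C) : T.obj B ⟶ T.obj B ⊗ T.obj (𝟙_ C) :=
  T.map (ρ_ B).inv ≫ Q.δ B (𝟙_ C)

lemma map_comp_coaction {B B' : C} (f : B ⟶ B') :
    T.map f ≫ Q.coaction B' = Q.coaction B ≫ (T.map f ▷ T.obj (𝟙_ C)) := by
  rw [coaction, coaction, ← T.map_comp_assoc, rightUnitor_inv_naturality, T.map_comp_assoc,
    map_whiskerRight_δ, Category.assoc]

end Comonoidal

section Bimonad

variable (T : Monad C) (Q : Comonoidal T.toFunctor)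

def tensorAction {B : C} (F : T.obj B ⟶ B) :
    T.obj (B ⊗ T.obj (𝟙_ C)) ⟶ B ⊗ T.obj (𝟙_ C) :=
  Q.δ B (T.obj (𝟙_ C)) ≫ (F ⊗ₘ T.μ.app (𝟙_ C))

def galoisMap {B : C} (F : T.obj B ⟶ B) : T.obj B ⟶ B ⊗ T.obj (𝟙_ C) :=
  Q.coaction B ≫ (F ▷ T.obj (𝟙_ C))

lemma map_trivialCoaction_tensorAction {B : C} (F : T.obj B ⟶ B) :
    T.map ((ρ_ B).inv ≫ (B ◁ T.η.app (𝟙_ C))) ≫ tensorAction T Q F = galoisMap T Q F := by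
  rw [T.map_comp, Category.assoc, tensorAction, reassoc_of% (Q.map_whiskerLeft_δ B),
    tensorHom_def', ← MonoidalCategory.whiskerLeft_comp_assoc, T.right_unit]
  simp [galoisMap, Comonoidal.coaction]

lemma η_galoisMap (hB : IsBimonad T Q) {B : C} (F : T.obj B ⟶ B) (hF : T.η.app B ≫ F = 𝟙 B) :
    T.η.app B ≫ galoisMap T Q F = (ρ_ B).inv ≫ (B ◁ T.η.app (𝟙_ C)) := by
  simp only [galoisMap, Comonoidal.coaction, Category.assoc]
  rw [← T.η.naturality_assoc, reassoc_of% (hB.eta_δ B (𝟙_ C)),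
    MonoidalCategory.tensorHom_def_assoc, whisker_exchange, ← comp_whiskerRight_assoc, hF]
  simp

lemma map_galoisMap_tensorAction (hB : IsBimonad T Q) {B : C} (F : T.obj B ⟶ B)
    (hF : T.μ.app B ≫ F = T.map F ≫ F) :
    T.map (galoisMap T Q F) ≫ tensorAction T Q F = T.μ.app B ≫ galoisMap T Q F := by
  have hμF : (T.map F ▷ T.obj (T.obj (𝟙_ C))) ≫ (F ⊗ₘ T.μ.app (𝟙_ C))
      = (T.μ.app B ⊗ₘ T.μ.app (𝟙_ C)) ≫ (F ▷ T.obj (𝟙_ C)) := by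
    rw [MonoidalCategory.tensorHom_def, ← comp_whiskerRight_assoc, ← hF, comp_whiskerRight_assoc]
    simp only [tensorHom_def', Category.assoc, whisker_exchange]
    rfl
  simp only [galoisMap, Comonoidal.coaction, tensorAction, T.map_comp, Category.assoc]
  rw [reassoc_of% (Q.map_whiskerRight_δ F), hμF, ← reassoc_of% (hB.mu_δ B (𝟙_ C)),
    ← T.μ.naturality_assoc]
  rfl

end Bimonad

section Antipode

variable (T : Monad C) (Q : Comonoidal T.toFunctor) (R : RightDualData C)
  (s : ∀ X : C, T.obj (R.d (T.obj X)) ⟶ R.d X)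

def antipodeCoev (B : C) : T.obj (𝟙_ C) ⟶ R.d B ⊗ T.obj (T.obj B) :=
  T.map (R.coev (T.obj B)) ≫ Q.δ (R.d (T.obj B)) (T.obj B) ≫ (s B ▷ T.obj (T.obj B))

def antipodeTwist (B : C) : B ⊗ T.obj (𝟙_ C) ⟶ T.obj (T.obj B) :=
  R.contract B (antipodeCoev T Q R s B)

def galoisInv {B : C} (F : T.obj B ⟶ B) : B ⊗ T.obj (𝟙_ C) ⟶ T.obj B :=
  antipodeTwist T Q R s B ≫ T.map F

lemma antipodeCoev_naturality (hs : IsRightAntipode T Q R s) {B B' : C} (g : B ⟶ B') :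
    antipodeCoev T Q R s B' ≫ (R.tr g ▷ T.obj (T.obj B'))
      = antipodeCoev T Q R s B ≫ (R.d B ◁ T.map (T.map g)) := by
  simp only [antipodeCoev, Category.assoc]
  rw [← comp_whiskerRight, ← hs.natural g, comp_whiskerRight,
    ← reassoc_of% (Q.map_whiskerRight_δ (R.tr (T.map g))), ← T.map_comp_assoc,
    ← R.coev_comp_whiskerLeft (T.map g), T.map_comp_assoc, reassoc_of% (Q.map_whiskerLeft_δ _),
    whisker_exchange]

lemma antipodeTwist_naturality (hs : IsRightAntipode T Q R s) {B B' : C} (g : B ⟶ B') :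
    (g ▷ T.obj (𝟙_ C)) ≫ antipodeTwist T Q R s B' = antipodeTwist T Q R s B ≫ T.map (T.map g) := by
  rw [antipodeTwist, R.whiskerRight_comp_contract, antipodeCoev_naturality T Q R s hs,
    R.contract_comp_whiskerLeft, antipodeTwist]

lemma antipodeTwist_μ (hs : IsRightAntipode T Q R s) (B : C) :
    antipodeTwist T Q R s B ≫ T.μ.app B = (B ◁ Q.ε) ≫ (ρ_ B).hom ≫ T.η.app B := by
  have hrant2 : antipodeCoev T Q R s B ≫ (R.d B ◁ T.μ.app B)
      = Q.ε ≫ R.coev B ≫ (R.d B ◁ T.η.app B) := by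
    simpa [antipodeCoev, MonoidalCategory.tensorHom_def] using (hs.rant2 B).symm
  rw [antipodeTwist, ← R.contract_comp_whiskerLeft, hrant2, ← Category.assoc,
    R.contract_comp_whiskerLeft, ← R.whiskerLeft_comp_contract, R.contract_coev, Category.assoc]

lemma antipodeCoev_coaction (B : C) :
    antipodeCoev T Q R s B ≫ (R.d B ◁ Q.coaction (T.obj B))
      = Delta1 T.toFunctor Q ≫ (antipodeCoev T Q R s B ▷ T.obj (𝟙_ C))
          ≫ (α_ (R.d B) (T.obj (T.obj B)) (T.obj (𝟙_ C))).hom := by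
  have hunit : T.map (R.coev (T.obj B)) ≫ T.map (_ ◁ (ρ_ (T.obj B)).inv)
      ≫ T.map (α_ (R.d (T.obj B)) (T.obj B) (𝟙_ C)).inv
      = T.map (λ_ (𝟙_ C)).inv ≫ T.map (R.coev (T.obj B) ▷ 𝟙_ C) := by
    simp only [← T.map_comp]
    congr 1
    rw [unitors_inv_equal, ← rightUnitor_inv_naturality]
    monoidal
  simp only [antipodeCoev, Comonoidal.coaction, Delta1, Category.assoc, comp_whiskerRight]
  rw [← whisker_exchange, MonoidalCategory.whiskerLeft_comp_assoc,
    ← reassoc_of% (Q.map_whiskerLeft_δ _), reassoc_of% (Q.δ_whiskerLeft_δ _ _ _),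
    ← associator_naturality_left, reassoc_of% hunit, reassoc_of% (Q.map_whiskerRight_δ _)]

lemma antipodeTwist_coaction (B : C) :
    antipodeTwist T Q R s B ≫ Q.coaction (T.obj B)
      = (B ◁ Delta1 T.toFunctor Q) ≫ (α_ B (T.obj (𝟙_ C)) (T.obj (𝟙_ C))).inv
          ≫ (antipodeTwist T Q R s B ▷ T.obj (𝟙_ C)) := by
  rw [antipodeTwist, ← R.contract_comp_whiskerLeft, antipodeCoev_coaction,
    R.contract_whiskerRight_comp_associator]

lemma coaction_galoisInv_μ (hs : IsRightAntipode T Q R s) (B : C) :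
    Q.coaction B ≫ galoisInv T Q R s (T.μ.app B) = T.map (T.η.app B) := by
  have hcoev : antipodeCoev T Q R s (T.obj B) ≫ (R.d (T.obj B) ◁ T.map (T.μ.app B))
      = T.map (R.coev (T.obj B)) ≫ Q.δ (R.d (T.obj B)) (T.obj B)
        ≫ ((T.map (R.tr (T.μ.app B)) ≫ s (T.obj B)) ▷ T.obj (T.obj B)) := by
    rw [antipodeCoev, Category.assoc, Category.assoc, ← whisker_exchange,
      ← reassoc_of% (Q.map_whiskerLeft_δ _), ← T.map_comp_assoc, R.coev_comp_whiskerLeft,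
      T.map_comp_assoc, reassoc_of% (Q.map_whiskerRight_δ _), comp_whiskerRight]
  have hrant1 := hs.rant1 B
  simp only [id_tensorHom, ← T.map_comp_assoc] at hrant1
  have hinner := R.contract_coev_comp_tr_whiskerRight (T.η.app B)
  rw [← Iso.inv_comp_eq, RightDualData.contract] at hinner
  rw [galoisInv, antipodeTwist, ← R.contract_comp_whiskerLeft, hcoev]
  simp only [Comonoidal.coaction, RightDualData.contract, MonoidalCategory.whiskerLeft_comp,
    Category.assoc]
  -- coassociativity brings the antipode next to the evaluation, where `rant1` removes it
  rw [← reassoc_of% (Q.map_whiskerLeft_δ _), reassoc_of% (Q.δ_whiskerLeft_δ _ _ _),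
    ← associator_naturality_middle_assoc, Iso.hom_inv_id_assoc]
  simp only [← comp_whiskerRight_assoc, ← hrant1]
  rw [comp_whiskerRight_assoc, ← reassoc_of% (Q.map_whiskerRight_δ _),
    Q.δ_ε_whiskerRight]
  simp only [← T.map_comp]
  refine congrArg T.map (Eq.trans ?_ hinner)
  simp only [MonoidalCategory.whiskerLeft_comp, comp_whiskerRight, Category.assoc,
    associator_inv_naturality_middle_assoc]
  rfl

lemma galoisInv_naturality (hs : IsRightAntipode T Q R s) {B B' : C} {F : T.obj B ⟶ B}
    {F' : T.obj B' ⟶ B'} (g : B ⟶ B') (hg : T.map g ≫ F' = F ≫ g) :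
    (g ▷ T.obj (𝟙_ C)) ≫ galoisInv T Q R s F' = galoisInv T Q R s F ≫ T.map g := by
  rw [galoisInv, galoisInv, reassoc_of% (antipodeTwist_naturality T Q R s hs g), ← T.map_comp,
    hg, T.map_comp, Category.assoc]

lemma galoisInv_action (hs : IsRightAntipode T Q R s) {B : C} {F : T.obj B ⟶ B}
    (hF₁ : T.η.app B ≫ F = 𝟙 B) (hF₂ : T.μ.app B ≫ F = T.map F ≫ F) :
    galoisInv T Q R s F ≫ F = (B ◁ Q.ε) ≫ (ρ_ B).hom := by
  rw [galoisInv, Category.assoc, ← hF₂, reassoc_of% (antipodeTwist_μ T Q R s hs B), hF₁,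
    Category.comp_id]

lemma galoisInv_coaction {B : C} (F : T.obj B ⟶ B) :
    galoisInv T Q R s F ≫ Q.coaction B
      = (B ◁ Delta1 T.toFunctor Q) ≫ (α_ B (T.obj (𝟙_ C)) (T.obj (𝟙_ C))).inv
          ≫ (galoisInv T Q R s F ▷ T.obj (𝟙_ C)) := by
  rw [galoisInv, Category.assoc, Q.map_comp_coaction, reassoc_of% (antipodeTwist_coaction T Q R s),
    comp_whiskerRight]

lemma galoisInv_galoisMap (hs : IsRightAntipode T Q R s) {B : C} {F : T.obj B ⟶ B}
    (hF₁ : T.η.app B ≫ F = 𝟙 B) (hF₂ : T.μ.app B ≫ F = T.map F ≫ F) :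
    galoisInv T Q R s F ≫ galoisMap T Q F = 𝟙 (B ⊗ T.obj (𝟙_ C)) := by
  rw [galoisMap, reassoc_of% (galoisInv_coaction T Q R s F), ← comp_whiskerRight,
    galoisInv_action T Q R s hs hF₁ hF₂, comp_whiskerRight,
    ← associator_inv_naturality_middle_assoc, ← MonoidalCategory.whiskerLeft_comp_assoc,
    Q.Delta1_ε_whiskerRight]
  monoidal

lemma galoisMap_galoisInv (hs : IsRightAntipode T Q R s) {B : C} {F : T.obj B ⟶ B}
    (hF₁ : T.η.app B ≫ F = 𝟙 B) (hF₂ : T.μ.app B ≫ F = T.map F ≫ F) :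
    galoisMap T Q F ≫ galoisInv T Q R s F = 𝟙 (T.obj B) := by
  rw [galoisMap, Category.assoc, galoisInv, reassoc_of% (antipodeTwist_naturality T Q R s hs F),
    ← T.map_comp, ← hF₂, T.map_comp, ← Category.assoc (antipodeTwist T Q R s (T.obj B)),
    ← galoisInv, reassoc_of% (coaction_galoisInv_μ T Q R s hs B), ← T.map_comp, hF₁, T.map_id]

end Antipode

section HopfModule

variable (T : Monad C) (Q : Comonoidal T.toFunctor) (R : RightDualData C)
  (s : ∀ X : C, T.obj (R.d (T.obj X)) ⟶ R.d X)

lemma whiskerLeft_Delta1_galoisInv_tensorAction (hB : IsBimonad T Q)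
    (hs : IsRightAntipode T Q R s) {B : C} {F : T.obj B ⟶ B}
    (hF₁ : T.η.app B ≫ F = 𝟙 B) (hF₂ : T.μ.app B ≫ F = T.map F ≫ F) :
    (B ◁ Delta1 T.toFunctor Q) ≫ (α_ B (T.obj (𝟙_ C)) (T.obj (𝟙_ C))).inv
        ≫ galoisInv T Q R s (tensorAction T Q F)
      = galoisInv T Q R s F ≫ T.map ((ρ_ B).inv ≫ (B ◁ T.η.app (𝟙_ C))) := by
  have hmod := map_galoisMap_tensorAction T Q hB F hF₂
  calc _ = (B ◁ Delta1 T.toFunctor Q) ≫ (α_ B (T.obj (𝟙_ C)) (T.obj (𝟙_ C))).inv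
          ≫ ((galoisInv T Q R s F ≫ galoisMap T Q F) ▷ T.obj (𝟙_ C))
          ≫ galoisInv T Q R s (tensorAction T Q F) := by
        rw [galoisInv_galoisMap T Q R s hs hF₁ hF₂, id_whiskerRight, Category.id_comp]
    _ = galoisInv T Q R s F ≫ Q.coaction B ≫ galoisInv T Q R s (T.μ.app B)
          ≫ T.map (galoisMap T Q F) := by
        rw [comp_whiskerRight_assoc, galoisInv_naturality T Q R s hs _ hmod,
          reassoc_of% (galoisInv_coaction T Q R s F)]
    _ = galoisInv T Q R s F ≫ T.map ((ρ_ B).inv ≫ (B ◁ T.η.app (𝟙_ C))) := by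
        rw [reassoc_of% (coaction_galoisInv_μ T Q R s hs B), ← T.map_comp,
          η_galoisMap T Q hB F hF₁]

namespace IsRightHopfModule

variable {T Q} {M : C} {r : T.obj M ⟶ M} {ρ : M ⟶ M ⊗ T.obj (𝟙_ C)}

lemma action_coaction (hM : IsRightHopfModule T Q M r ρ) :
    r ≫ ρ = T.map ρ ≫ tensorAction T Q r :=
  hM.hopf

lemma coaction_galoisInv_action (hs : IsRightAntipode T Q R s)
    (hM : IsRightHopfModule T Q M r ρ) : (ρ ≫ galoisInv T Q R s r) ≫ r = 𝟙 M := by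
  rw [Category.assoc, galoisInv_action T Q R s hs hM.unit hM.assoc]
  simpa using hM.comodule.counit

lemma coaction_galoisInv_map_coaction (hB : IsBimonad T Q) (hs : IsRightAntipode T Q R s)
    (hM : IsRightHopfModule T Q M r ρ) :
    (ρ ≫ galoisInv T Q R s r) ≫ T.map ρ
      = (ρ ≫ galoisInv T Q R s r) ≫ T.map ((ρ_ M).inv ≫ (𝟙 M ⊗ₘ T.η.app (𝟙_ C))) := by
  have hcoassoc : ρ ≫ (ρ ▷ T.obj (𝟙_ C)) = ρ ≫ (M ◁ Delta1 T.toFunctor Q)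
      ≫ (α_ M (T.obj (𝟙_ C)) (T.obj (𝟙_ C))).inv := by
    simpa using congrArg (· ≫ (α_ M (T.obj (𝟙_ C)) (T.obj (𝟙_ C))).inv) hM.comodule.coassoc
  rw [Category.assoc, ← galoisInv_naturality T Q R s hs ρ hM.action_coaction.symm,
    reassoc_of% hcoassoc, whiskerLeft_Delta1_galoisInv_tensorAction T Q R s hB hs hM.unit hM.assoc,
    id_tensorHom, Category.assoc]

lemma map_action_coaction (hM : IsRightHopfModule T Q M r ρ) {N : C} (j : N ⟶ M)
    (hj : j ≫ ρ = j ≫ (ρ_ M).inv ≫ (𝟙 M ⊗ₘ T.η.app (𝟙_ C))) :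
    T.map j ≫ r ≫ ρ = T.map j ≫ galoisMap T Q r := by
  rw [hM.action_coaction, ← T.map_comp_assoc, hj, id_tensorHom, T.map_comp_assoc,
    map_trivialCoaction_tensorAction]

lemma map_action_coaction_galoisInv (hs : IsRightAntipode T Q R s)
    (hM : IsRightHopfModule T Q M r ρ) {N : C} (j : N ⟶ M)
    (hj : j ≫ ρ = j ≫ (ρ_ M).inv ≫ (𝟙 M ⊗ₘ T.η.app (𝟙_ C))) :
    T.map j ≫ r ≫ ρ ≫ galoisInv T Q R s r = T.map j := by
  rw [reassoc_of% (hM.map_action_coaction j hj),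
    galoisMap_galoisInv T Q R s hs hM.unit hM.assoc, Category.comp_id]

lemma map_action_comp_coaction (hM : IsRightHopfModule T Q M r ρ) {N : C} (j : N ⟶ M)
    (hj : j ≫ ρ = j ≫ (ρ_ M).inv ≫ (𝟙 M ⊗ₘ T.η.app (𝟙_ C))) :
    (T.map j ≫ r) ≫ ρ = Q.coaction N ≫ ((T.map j ≫ r) ⊗ₘ 𝟙 (T.obj (𝟙_ C))) := by
  rw [Category.assoc, hM.map_action_coaction j hj, galoisMap,
    reassoc_of% (Q.map_comp_coaction j), tensorHom_id, comp_whiskerRight]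

end IsRightHopfModule

end HopfModule

theorem stmt14_general (T : Monad C) (Q : Comonoidal T.toFunctor) (hB : IsBimonad T Q)
    (R : RightDualData C) (sr : ∀ X : C, T.obj (R.d (T.obj X)) ⟶ R.d X)
    (hsr : IsRightAntipode T Q R sr)
    (M : C) (r : T.obj M ⟶ M) (ρ : M ⟶ M ⊗ T.obj (𝟙_ C))
    (hM : IsRightHopfModule T Q M r ρ)
    (N : C) (i : N ⟶ M)
    (hi : i ≫ ρ = i ≫ (ρ_ M).inv ≫ (𝟙 M ⊗ₘ T.η.app (𝟙_ C)))
    (hTuniv : ∀ ⦃W : C⦄ (j : W ⟶ T.obj M),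
      j ≫ T.map ρ = j ≫ T.map ((ρ_ M).inv ≫ (𝟙 M ⊗ₘ T.η.app (𝟙_ C))) →
      ∃! k : W ⟶ T.obj N, k ≫ T.map i = j) :
    IsIso (T.map i ≫ r) ∧
    (T.μ.app N ≫ T.map i ≫ r = T.map (T.map i ≫ r) ≫ r) ∧
    ((T.map i ≫ r) ≫ ρ
      = (T.map (ρ_ N).inv ≫ Q.δ N (𝟙_ C)) ≫ ((T.map i ≫ r) ⊗ₘ 𝟙 (T.obj (𝟙_ C)))) := by
  have hTi : T.map i ≫ T.map ρ = T.map i ≫ T.map ((ρ_ M).inv ≫ (𝟙 M ⊗ₘ T.η.app (𝟙_ C))) := by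
    simp only [← T.map_comp, hi]
  let hlim : Limits.IsLimit (Limits.Fork.ofι (T.map i) hTi) :=
    Limits.Fork.IsLimit.ofExistsUnique fun t => hTuniv t.ι t.condition
  have : Mono (T.map i) := Limits.mono_of_isLimit_fork hlim
  obtain ⟨ψ, hψ : ψ ≫ T.map i = ρ ≫ galoisInv T Q R sr r⟩ :=
    Limits.Fork.IsLimit.lift' hlim _ (hM.coaction_galoisInv_map_coaction R sr hB hsr)
  refine ⟨⟨ψ, ?_, ?_⟩, ?_, hM.map_action_comp_coaction i hi⟩
  · rw [← cancel_mono (T.map i), Category.assoc, Category.assoc, hψ, Category.id_comp]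
    exact hM.map_action_coaction_galoisInv R sr hsr i hi
  · rw [← Category.assoc, hψ, hM.coaction_galoisInv_action R sr hsr]
  · rw [← T.μ.naturality_assoc, hM.assoc, T.map_comp_assoc]
    rfl

/-- fundamental theorem of Hopf modules. Let `T` be a right Hopf
monad (a bimonad with a right antipode) on a right autonomous category, and let
`(M,r,ρ)` be a right Hopf `T`-module such that the pair `(ρ, id_M ⊗ η_𝟙)` admits an
equalizer `i : M^{coT} ⟶ M` which is preserved by `T`.  Then
`r ∘ T(i) : (T(M^{coT}), μ, T_2(M^{coT},𝟙)) ⟶ (M,r,ρ)` is an isomorphism of right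
Hopf `T`-modules (i.e. an isomorphism, `T`-linear, and a morphism of comodules). -/
theorem stmt14 (T : Monad C) (Q : Comonoidal T.toFunctor) (hB : IsBimonad T Q)
    (R : RightDualData C) (sr : ∀ X : C, T.obj (R.d (T.obj X)) ⟶ R.d X)
    (hsr : IsRightAntipode T Q R sr)
    (M : C) (r : T.obj M ⟶ M) (ρ : M ⟶ M ⊗ T.obj (𝟙_ C))
    (hM : IsRightHopfModule T Q M r ρ)
    (N : C) (i : N ⟶ M)
    (hi : i ≫ ρ = i ≫ (ρ_ M).inv ≫ (𝟙 M ⊗ₘ T.η.app (𝟙_ C)))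
    (huniv : ∀ ⦃W : C⦄ (j : W ⟶ M),
      j ≫ ρ = j ≫ (ρ_ M).inv ≫ (𝟙 M ⊗ₘ T.η.app (𝟙_ C)) →
      ∃! k : W ⟶ N, k ≫ i = j)
    (hTuniv : ∀ ⦃W : C⦄ (j : W ⟶ T.obj M),
      j ≫ T.map ρ = j ≫ T.map ((ρ_ M).inv ≫ (𝟙 M ⊗ₘ T.η.app (𝟙_ C))) →
      ∃! k : W ⟶ T.obj N, k ≫ T.map i = j) :
    IsIso (T.map i ≫ r) ∧
    (T.μ.app N ≫ T.map i ≫ r = T.map (T.map i ≫ r) ≫ r) ∧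
    ((T.map i ≫ r) ≫ ρ
      = (T.map (ρ_ N).inv ≫ Q.δ N (𝟙_ C)) ≫ ((T.map i ≫ r) ⊗ₘ 𝟙 (T.obj (𝟙_ C)))) :=
  stmt14_general T Q hB R sr hsr M r ρ hM N i hi hTuniv

end HopfMonadPaper
end

section
/- Let T be a monad on a category C. The following are equivalent: (i) for every T-module (M,r), the T-linear morphism r : (T(M),μ_M) → (M,r) admits a T-linear section; (ii) every T-linear morphism whose underlying morphism in C has a section admits a T-linear section; (iii) every T-module is a T-linear retract of a free T-module (T(X),μ_X). -/
/-!
Everything happens at the level of an adjunction `L ⊣ R` with counit `ε`; for the monad `T` this is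
the free–forgetful adjunction, whose counit at `(M, r)` is `r`.

Condition (i) says that every `ε_Y` is a split epimorphism. Given it, a morphism `f : X ⟶ Y` such
that `R f` has a section `g` is split by `s ≫ L g ≫ ε_X`, where `s` splits `ε_Y`; conversely `R ε_Y`
is always split by the unit, so (ii) applies to `ε_Y`. For (iii), `ε_{L X}` is split by `L η_X`
(a triangle identity), and split epimorphy of the components of a natural transformation passes to
retracts; conversely a splitting of `ε_Y` exhibits `Y` as a retract of `L (R Y)`.
-/

open CategoryTheory

namespace CategoryTheory

variable {C D : Type*} [Category C] [Category D]

lemma isSplitEpi_iff_exists_section {X Y : C} (f : X ⟶ Y) :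
    IsSplitEpi f ↔ ∃ s : Y ⟶ X, s ≫ f = 𝟙 Y :=
  ⟨fun _ => ⟨section_ f, IsSplitEpi.id f⟩, fun ⟨s, hs⟩ => IsSplitEpi.mk' ⟨s, hs⟩⟩

lemma nonempty_retract_iff {X Y : C} :
    Nonempty (Retract X Y) ↔ ∃ (r : Y ⟶ X) (i : X ⟶ Y), i ≫ r = 𝟙 X :=
  ⟨fun ⟨h⟩ => ⟨h.r, h.i, h.retract⟩, fun ⟨r, i, h⟩ => ⟨⟨i, r, h⟩⟩⟩

lemma NatTrans.isSplitEpi_app_of_retract {F G : C ⥤ D} (α : F ⟶ G) {X Y : C} (h : Retract X Y)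
    [IsSplitEpi (α.app Y)] : IsSplitEpi (α.app X) :=
  IsSplitEpi.mk' ⟨G.map h.i ≫ section_ (α.app Y) ≫ F.map h.r, by
    simp [← G.map_comp]⟩

namespace Adjunction

variable {L : C ⥤ D} {R : D ⥤ C} (adj : L ⊣ R)

lemma isSplitEpi_counit_app_obj (X : C) : IsSplitEpi (adj.counit.app (L.obj X)) :=
  IsSplitEpi.mk' ⟨L.map (adj.unit.app X), adj.left_triangle_components X⟩

lemma isSplitEpi_map_counit_app (Y : D) : IsSplitEpi (R.map (adj.counit.app Y)) :=
  IsSplitEpi.mk' ⟨adj.unit.app (R.obj Y), adj.right_triangle_components Y⟩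

lemma isSplitEpi_of_isSplitEpi_map {X Y : D} (f : X ⟶ Y) [IsSplitEpi (R.map f)]
    [IsSplitEpi (adj.counit.app Y)] : IsSplitEpi f :=
  IsSplitEpi.mk' ⟨section_ (adj.counit.app Y) ≫ L.map (section_ (R.map f)) ≫ adj.counit.app X, by
    rw [Category.assoc, Category.assoc, ← adj.counit_naturality, ← L.map_comp_assoc,
      IsSplitEpi.id, L.map_id, Category.id_comp, IsSplitEpi.id]⟩

theorem forall_isSplitEpi_counit_app_iff_forall_isSplitEpi_of_map :
    (∀ Y, IsSplitEpi (adj.counit.app Y)) ↔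
      ∀ (X Y : D) (f : X ⟶ Y), IsSplitEpi (R.map f) → IsSplitEpi f :=
  ⟨fun _ _ _ f _ => adj.isSplitEpi_of_isSplitEpi_map f,
    fun h Y => h _ _ _ (adj.isSplitEpi_map_counit_app Y)⟩

theorem forall_isSplitEpi_counit_app_iff_forall_retract_obj :
    (∀ Y, IsSplitEpi (adj.counit.app Y)) ↔ ∀ Y, ∃ X, Nonempty (Retract Y (L.obj X)) := by
  refine ⟨fun h Y => ⟨R.obj Y, ⟨section_ (adj.counit.app Y), adj.counit.app Y, IsSplitEpi.id _⟩⟩,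
    fun h Y => ?_⟩
  obtain ⟨X, ⟨e⟩⟩ := h Y
  have := adj.isSplitEpi_counit_app_obj X
  exact NatTrans.isSplitEpi_app_of_retract adj.counit e

end Adjunction

lemma Monad.Algebra.exists_linear_section_iff {T : Monad C} (M : T.Algebra) :
    (∃ σ : M.A ⟶ T.obj M.A, M.a ≫ σ = T.map σ ≫ T.μ.app M.A ∧ σ ≫ M.a = 𝟙 M.A) ↔
      IsSplitEpi (T.adj.counit.app M) := by
  rw [isSplitEpi_iff_exists_section, Monad.adj_counit]
  constructor
  · rintro ⟨σ, hlin, hsec⟩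
    exact ⟨⟨σ, hlin.symm⟩, Monad.Algebra.Hom.ext hsec⟩
  · rintro ⟨s, hs⟩
    exact ⟨s.f, s.h.symm, congrArg Monad.Algebra.Hom.f hs⟩

end CategoryTheory

/-- For a monad `T` on a category `C`, the following are
equivalent (a monad satisfying them is called semisimple):
(i) for every `T`-module `(M,r)`, the `T`-linear morphism `r : (T M,μ_M) ⟶ (M,r)`
admits a `T`-linear section;
(ii) every `T`-linear morphism whose underlying morphism has a section in `C`
admits a `T`-linear section;
(iii) every `T`-module is a `T`-linear retract of a free `T`-module. -/
theorem stmt16 {C : Type*} [Category C] (T : Monad C) :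
    ((∀ M : T.Algebra, ∃ σ : M.A ⟶ T.obj M.A,
        M.a ≫ σ = T.map σ ≫ T.μ.app M.A ∧ σ ≫ M.a = 𝟙 M.A) ↔
      (∀ (M N : T.Algebra) (f : M ⟶ N),
        (∃ g : N.A ⟶ M.A, g ≫ f.f = 𝟙 N.A) → ∃ g' : N ⟶ M, g' ≫ f = 𝟙 N)) ∧
    ((∀ M : T.Algebra, ∃ σ : M.A ⟶ T.obj M.A,
        M.a ≫ σ = T.map σ ≫ T.μ.app M.A ∧ σ ≫ M.a = 𝟙 M.A) ↔
      (∀ M : T.Algebra, ∃ (X : C) (p : T.free.obj X ⟶ M) (j : M ⟶ T.free.obj X),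
        j ≫ p = 𝟙 M)) := by
  simp only [Monad.Algebra.exists_linear_section_iff]
  constructor
  · rw [T.adj.forall_isSplitEpi_counit_app_iff_forall_isSplitEpi_of_map]
    simp only [isSplitEpi_iff_exists_section]
    rfl
  · rw [T.adj.forall_isSplitEpi_counit_app_iff_forall_retract_obj]
    simp only [nonempty_retract_iff]
end

section
/- Let T be a monad on a category C. The following are equivalent: (i) there is a functorial choice of T-linear sections σ_{(M,r)} of the structure maps r : T(M) → M, natural in the sense that σ_{(N,s)}∘f = T(f)∘σ_{(M,r)} for all T-linear f; (ii) there exists a natural transformation ς : T → T² with T(μ_X)∘ς_{T(X)} = ς_X∘μ_X = μ_{T(X)}∘T(ς_X) and μ_X∘ς_X = id_{T(X)}; (iii) there exists a natural transformation γ : 1_C → T² with T(μ_X)∘γ_{T(X)} = μ_{T(X)}∘T(γ_X) and μ_X∘γ_X = η_X. -/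
open CategoryTheory

section Aux
variable {C : Type*} [Category C] (T : Monad C)

private theorem aux_i_to_ii
    (h : ∃ σ : ∀ M : T.Algebra, M.A ⟶ T.obj M.A,
        (∀ M : T.Algebra, M.a ≫ σ M = T.map (σ M) ≫ T.μ.app M.A) ∧
        (∀ M : T.Algebra, σ M ≫ M.a = 𝟙 M.A) ∧
        (∀ (M N : T.Algebra) (f : M ⟶ N), f.f ≫ σ N = σ M ≫ T.map f.f)) :
    ∃ ς : T.toFunctor ⟶ T.toFunctor ⋙ T.toFunctor,
        (∀ X : C, ς.app (T.obj X) ≫ T.map (T.μ.app X) = T.μ.app X ≫ ς.app X) ∧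
        (∀ X : C, T.μ.app X ≫ ς.app X = T.map (ς.app X) ≫ T.μ.app (T.obj X)) ∧
        (∀ X : C, ς.app X ≫ T.μ.app X = 𝟙 (T.obj X)) := by
  obtain ⟨σ, h1, h2, h3⟩ := h
  refine ⟨{ app := fun X => σ (T.free.obj X),
            naturality := fun X Y f => h3 _ _ (T.free.map f) }, ?_, ?_, ?_⟩
  · intro X
    have := h3 (T.free.obj (T.obj X)) (T.free.obj X)
      ⟨T.μ.app X, (T.assoc X)⟩
    exact this.symm
  · intro X
    exact h1 (T.free.obj X)
  · intro X
    exact h2 (T.free.obj X)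

private theorem aux_ii_to_iii
    (h : ∃ ς : T.toFunctor ⟶ T.toFunctor ⋙ T.toFunctor,
        (∀ X : C, ς.app (T.obj X) ≫ T.map (T.μ.app X) = T.μ.app X ≫ ς.app X) ∧
        (∀ X : C, T.μ.app X ≫ ς.app X = T.map (ς.app X) ≫ T.μ.app (T.obj X)) ∧
        (∀ X : C, ς.app X ≫ T.μ.app X = 𝟙 (T.obj X))) :
    ∃ γ : 𝟭 C ⟶ T.toFunctor ⋙ T.toFunctor,
        (∀ X : C, γ.app (T.obj X) ≫ T.map (T.μ.app X)
          = T.map (γ.app X) ≫ T.μ.app (T.obj X)) ∧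
        (∀ X : C, γ.app X ≫ T.μ.app X = T.η.app X) := by
  obtain ⟨ς, h1, h2, h3⟩ := h
  refine ⟨{ app := fun X => T.η.app X ≫ ς.app X,
            naturality := fun X Y f => by
              have h := T.η.naturality f
              simp only [Functor.id_map] at h
              simp only [Functor.id_map, Category.assoc, ← ς.naturality]
              rw [← Category.assoc, h, Category.assoc] }, ?_, ?_⟩
  · intro X
    rw [Category.assoc, h1, T.left_unit_assoc]
    rw [T.map_comp, Category.assoc, ← h2, ← Category.assoc, T.right_unit,
      Category.id_comp]
  · intro X
    rw [Category.assoc, h3, Category.comp_id]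

private theorem aux_iii_to_i
    (h : ∃ γ : 𝟭 C ⟶ T.toFunctor ⋙ T.toFunctor,
        (∀ X : C, γ.app (T.obj X) ≫ T.map (T.μ.app X)
          = T.map (γ.app X) ≫ T.μ.app (T.obj X)) ∧
        (∀ X : C, γ.app X ≫ T.μ.app X = T.η.app X)) :
    ∃ σ : ∀ M : T.Algebra, M.A ⟶ T.obj M.A,
        (∀ M : T.Algebra, M.a ≫ σ M = T.map (σ M) ≫ T.μ.app M.A) ∧
        (∀ M : T.Algebra, σ M ≫ M.a = 𝟙 M.A) ∧
        (∀ (M N : T.Algebra) (f : M ⟶ N), f.f ≫ σ N = σ M ≫ T.map f.f) := by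
  obtain ⟨γ, h1, h2⟩ := h
  refine ⟨fun M => γ.app M.A ≫ T.map M.a, ?_, ?_, ?_⟩
  · intro M
    have nat := γ.naturality M.a
    simp only [Functor.id_map, Functor.comp_map] at nat
    have hn := T.μ.naturality M.a
    simp only [Functor.comp_map] at hn
    rw [← Category.assoc, nat, Category.assoc, ← T.map_comp, ← M.assoc,
      T.map_comp]
    rw [T.map_comp, Category.assoc, hn, ← Category.assoc, h1,
      Category.assoc]
  · intro M
    rw [Category.assoc, ← M.assoc, ← Category.assoc, h2, M.unit]
  · intro M N f
    have nat := γ.naturality f.f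
    simp only [Functor.id_map, Functor.comp_map] at nat
    rw [← Category.assoc, nat, Category.assoc, ← T.map_comp,
      f.h, T.map_comp, Category.assoc]

private theorem aux_i_to_iii
    (h : ∃ σ : ∀ M : T.Algebra, M.A ⟶ T.obj M.A,
        (∀ M : T.Algebra, M.a ≫ σ M = T.map (σ M) ≫ T.μ.app M.A) ∧
        (∀ M : T.Algebra, σ M ≫ M.a = 𝟙 M.A) ∧
        (∀ (M N : T.Algebra) (f : M ⟶ N), f.f ≫ σ N = σ M ≫ T.map f.f)) :
    ∃ γ : 𝟭 C ⟶ T.toFunctor ⋙ T.toFunctor,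
        (∀ X : C, γ.app (T.obj X) ≫ T.map (T.μ.app X)
          = T.map (γ.app X) ≫ T.μ.app (T.obj X)) ∧
        (∀ X : C, γ.app X ≫ T.μ.app X = T.η.app X) :=
  aux_ii_to_iii T (aux_i_to_ii T h)

end Aux

/-- For a monad `T` on a category `C`, the following are
equivalent (a monad satisfying them is called separable):
(i) there is a functorial choice of `T`-linear sections `σ_{(M,r)}` of the structure
maps `r : T(M) ⟶ M`;
(ii) there is a natural transformation `ς : T ⟶ T²` with
`T(μ_X) ∘ ς_{T(X)} = ς_X ∘ μ_X = μ_{T(X)} ∘ T(ς_X)` and `μ_X ∘ ς_X = id`;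
(iii) there is a natural transformation `γ : 1_C ⟶ T²` with
`T(μ_X) ∘ γ_{T(X)} = μ_{T(X)} ∘ T(γ_X)` and `μ_X ∘ γ_X = η_X`. -/
theorem stmt17 {C : Type*} [Category C] (T : Monad C) :
    ((∃ σ : ∀ M : T.Algebra, M.A ⟶ T.obj M.A,
        (∀ M : T.Algebra, M.a ≫ σ M = T.map (σ M) ≫ T.μ.app M.A) ∧
        (∀ M : T.Algebra, σ M ≫ M.a = 𝟙 M.A) ∧
        (∀ (M N : T.Algebra) (f : M ⟶ N), f.f ≫ σ N = σ M ≫ T.map f.f)) ↔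
      (∃ ς : T.toFunctor ⟶ T.toFunctor ⋙ T.toFunctor,
        (∀ X : C, ς.app (T.obj X) ≫ T.map (T.μ.app X) = T.μ.app X ≫ ς.app X) ∧
        (∀ X : C, T.μ.app X ≫ ς.app X = T.map (ς.app X) ≫ T.μ.app (T.obj X)) ∧
        (∀ X : C, ς.app X ≫ T.μ.app X = 𝟙 (T.obj X)))) ∧
    ((∃ σ : ∀ M : T.Algebra, M.A ⟶ T.obj M.A,
        (∀ M : T.Algebra, M.a ≫ σ M = T.map (σ M) ≫ T.μ.app M.A) ∧
        (∀ M : T.Algebra, σ M ≫ M.a = 𝟙 M.A) ∧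
        (∀ (M N : T.Algebra) (f : M ⟶ N), f.f ≫ σ N = σ M ≫ T.map f.f)) ↔
      (∃ γ : 𝟭 C ⟶ T.toFunctor ⋙ T.toFunctor,
        (∀ X : C, γ.app (T.obj X) ≫ T.map (T.μ.app X)
          = T.map (γ.app X) ≫ T.μ.app (T.obj X)) ∧
        (∀ X : C, γ.app X ≫ T.μ.app X = T.η.app X))) := by
  refine ⟨⟨aux_i_to_ii T, fun h => aux_iii_to_i T (aux_ii_to_iii T h)⟩,
    ⟨aux_i_to_iii T, aux_iii_to_i T⟩⟩
end

section
/- Let T be a bimonad on a monoidal category C. An R-matrix for T (a convolution-invertible natural transformation R_{X,Y} : X⊗Y → T(Y)⊗T(X) satisfying the three R-matrix axioms) induces a braiding τ on the category of T-modules by τ_{(M,r),(N,s)} = (s⊗r)∘R_{M,N}, and this assignment is a bijection between R-matrices for T and braidings on T-Mod. -/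
open CategoryTheory MonoidalCategory

namespace HopfMonadPaper

variable {C : Type*} [Category C] [MonoidalCategory C]

/-- The tensor product of two modules over a bimonad (Moerdijk's lifted monoidal
structure): carrier `M.A ⊗ N.A` with action `(M.a ⊗ N.a) ∘ T_2(M.A, N.A)`.
(The algebra axioms are consequences of the bimonad axioms.) -/
def tensorAlgebra (T : Monad C) (Q : Comonoidal T.toFunctor) (hB : IsBimonad T Q)
    (M N : T.Algebra) : T.Algebra where
  A := M.A ⊗ N.A
  a := Q.δ M.A N.A ≫ (M.a ⊗ₘ N.a)
  unit := by
    rw [← Category.assoc, hB.eta_δ, tensorHom_comp_tensorHom, M.unit, N.unit]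
    simp
  assoc := by
    calc T.μ.app (M.A ⊗ N.A) ≫ Q.δ M.A N.A ≫ (M.a ⊗ₘ N.a)
        = (T.map (Q.δ M.A N.A) ≫ Q.δ (T.obj M.A) (T.obj N.A)
            ≫ (T.μ.app M.A ⊗ₘ T.μ.app N.A)) ≫ (M.a ⊗ₘ N.a) := by
          rw [← Category.assoc, hB.mu_δ M.A N.A]
      _ = T.map (Q.δ M.A N.A) ≫ Q.δ (T.obj M.A) (T.obj N.A)
            ≫ ((T.μ.app M.A ≫ M.a) ⊗ₘ (T.μ.app N.A ≫ N.a)) := by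
          simp [Category.assoc, ← tensorHom_comp_tensorHom]
      _ = T.map (Q.δ M.A N.A) ≫ Q.δ (T.obj M.A) (T.obj N.A)
            ≫ ((T.map M.a ≫ M.a) ⊗ₘ (T.map N.a ≫ N.a)) := by
          rw [M.assoc, N.assoc]
      _ = T.map (Q.δ M.A N.A) ≫ (Q.δ (T.obj M.A) (T.obj N.A)
            ≫ (T.map M.a ⊗ₘ T.map N.a)) ≫ (M.a ⊗ₘ N.a) := by
          simp [Category.assoc, ← tensorHom_comp_tensorHom]
      _ = T.map (Q.δ M.A N.A) ≫ T.map (M.a ⊗ₘ N.a) ≫ Q.δ M.A N.A ≫ (M.a ⊗ₘ N.a) := by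
          rw [← Q.δ_natural M.a N.a]; simp [Category.assoc]
      _ = T.map (Q.δ M.A N.A ≫ (M.a ⊗ₘ N.a)) ≫ Q.δ M.A N.A ≫ (M.a ⊗ₘ N.a) := by
          rw [Functor.map_comp]; simp [Category.assoc]

/-- An R-matrix for a bimonad `T`: a convolution-invertible natural family
`R X Y : X ⊗ Y ⟶ T(Y) ⊗ T(X)` satisfying the three R-matrix axioms. -/
structure IsRMatrix (T : Monad C) (Q : Comonoidal T.toFunctor)
    (R : ∀ X Y : C, X ⊗ Y ⟶ T.obj Y ⊗ T.obj X) : Prop where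
  natural : ∀ {X X' Y Y' : C} (f : X ⟶ X') (g : Y ⟶ Y'),
    (f ⊗ₘ g) ≫ R X' Y' = R X Y ≫ (T.map g ⊗ₘ T.map f)
  invertible : ∃ R' : ∀ X Y : C, Y ⊗ X ⟶ T.obj X ⊗ T.obj Y,
    (∀ {X X' Y Y' : C} (f : X ⟶ X') (g : Y ⟶ Y'),
      (g ⊗ₘ f) ≫ R' X' Y' = R' X Y ≫ (T.map f ⊗ₘ T.map g)) ∧
    (∀ X Y : C, R X Y ≫ R' (T.obj X) (T.obj Y) ≫ (T.μ.app X ⊗ₘ T.μ.app Y)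
      = T.η.app X ⊗ₘ T.η.app Y) ∧
    (∀ X Y : C, R' X Y ≫ R (T.obj X) (T.obj Y) ≫ (T.μ.app Y ⊗ₘ T.μ.app X)
      = T.η.app Y ⊗ₘ T.η.app X)
  rmat1 : ∀ X Y : C,
    Q.δ X Y ≫ R (T.obj X) (T.obj Y) ≫ (T.μ.app Y ⊗ₘ T.μ.app X)
      = T.map (R X Y) ≫ Q.δ (T.obj Y) (T.obj X) ≫ (T.μ.app Y ⊗ₘ T.μ.app X)
  rmat2 : ∀ X Y Z : C,
    R (X ⊗ Y) Z ≫ (𝟙 (T.obj Z) ⊗ₘ Q.δ X Y)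
      = (α_ X Y Z).hom ≫ (𝟙 X ⊗ₘ R Y Z) ≫ (α_ X (T.obj Z) (T.obj Y)).inv
        ≫ ((R X (T.obj Z) ≫ (T.μ.app Z ⊗ₘ 𝟙 (T.obj X))) ⊗ₘ 𝟙 (T.obj Y))
        ≫ (α_ (T.obj Z) (T.obj X) (T.obj Y)).hom
  rmat3 : ∀ X Y Z : C,
    R X (Y ⊗ Z) ≫ (Q.δ Y Z ⊗ₘ 𝟙 (T.obj X))
      = (α_ X Y Z).inv ≫ (R X Y ⊗ₘ 𝟙 Z) ≫ (α_ (T.obj Y) (T.obj X) Z).hom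
        ≫ (𝟙 (T.obj Y) ⊗ₘ (R (T.obj X) Z ≫ (𝟙 (T.obj Z) ⊗ₘ T.μ.app X)))
        ≫ (α_ (T.obj Y) (T.obj Z) (T.obj X)).inv

/-- A braiding on the (lifted monoidal) category of modules over a bimonad,
expressed on underlying objects: a `T`-linear natural isomorphism
`τ M N : M ⊗ N ≅ N ⊗ M` satisfying the two hexagon identities. -/
structure IsBraidingOnModules (T : Monad C) (Q : Comonoidal T.toFunctor)
    (hB : IsBimonad T Q)
    (τ : ∀ M N : T.Algebra, M.A ⊗ N.A ⟶ N.A ⊗ M.A) : Prop where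
  natural : ∀ {M M' N N' : T.Algebra} (f : M ⟶ M') (g : N ⟶ N'),
    (f.f ⊗ₘ g.f) ≫ τ M' N' = τ M N ≫ (g.f ⊗ₘ f.f)
  linear : ∀ M N : T.Algebra,
    (Q.δ M.A N.A ≫ (M.a ⊗ₘ N.a)) ≫ τ M N
      = T.map (τ M N) ≫ Q.δ N.A M.A ≫ (N.a ⊗ₘ M.a)
  iso : ∀ M N : T.Algebra, IsIso (τ M N)
  hex1 : ∀ M N P : T.Algebra,
    τ M (tensorAlgebra T Q hB N P)
      = (α_ M.A N.A P.A).inv ≫ (τ M N ⊗ₘ 𝟙 P.A) ≫ (α_ N.A M.A P.A).hom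
        ≫ (𝟙 N.A ⊗ₘ τ M P) ≫ (α_ N.A P.A M.A).inv
  hex2 : ∀ M N P : T.Algebra,
    τ (tensorAlgebra T Q hB M N) P
      = (α_ M.A N.A P.A).hom ≫ (𝟙 M.A ⊗ₘ τ N P) ≫ (α_ M.A P.A N.A).inv
        ≫ (τ M P ⊗ₘ 𝟙 N.A) ≫ (α_ P.A M.A N.A).hom


/-!
A `T`-module map out of a free module `F X = (T X, μ_X)` is determined by its restriction along
`η_X`, and the action `M.a : F M.A ⟶ M` of any module is a module map. Hence a natural braiding `τ`
on `T`-Mod is determined by `R_{X,Y} := τ_{FX,FY} ∘ (η_X ⊗ η_Y)`, and `τ_{M,N} = (N.a ⊗ M.a) ∘ R_{M,N}`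
recovers it; conversely `R_{X,Y} = (μ_Y ⊗ μ_X) ∘ R_{TX,TY} ∘ (η ⊗ η)` for any natural `R`, so the
two constructions are mutually inverse. Under this correspondence `T`-linearity of `τ` is the first
R-matrix axiom, invertibility of `τ` is convolution invertibility of `R`, and the two hexagons,
evaluated on free modules and transported along the module map `T_2(X,Y) : F(X ⊗ Y) ⟶ FX ⊗ FY`,
are the other two R-matrix axioms.
-/

lemma associator_hom_exchange {X X' Y Y' Z Z' U V W : C} (a : X ⟶ X') (b : Y ⟶ Y') (c : Z ⟶ Z')
    (s : Y' ⊗ Z' ⟶ U ⊗ V) (t : X' ⊗ U ⟶ W) :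
    ((a ⊗ₘ b) ⊗ₘ c) ≫ (α_ X' Y' Z').hom ≫ (𝟙 X' ⊗ₘ s) ≫ (α_ X' U V).inv ≫ (t ⊗ₘ 𝟙 V)
      = (α_ X Y Z).hom ≫ (𝟙 X ⊗ₘ ((b ⊗ₘ c) ≫ s)) ≫ (α_ X U V).inv
        ≫ (((a ⊗ₘ 𝟙 U) ≫ t) ⊗ₘ 𝟙 V) :=
  calc _ = (α_ X Y Z).hom ≫ (a ⊗ₘ ((b ⊗ₘ c) ≫ s)) ≫ (α_ X' U V).inv ≫ (t ⊗ₘ 𝟙 V) := by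
        monoidal
    _ = _ := by
        rw [tensorHom_def']
        monoidal

lemma associator_inv_exchange {X X' Y Y' Z Z' U V W : C} (a : X ⟶ X') (b : Y ⟶ Y') (c : Z ⟶ Z')
    (s : X' ⊗ Y' ⟶ U ⊗ V) (t : V ⊗ Z' ⟶ W) :
    (a ⊗ₘ (b ⊗ₘ c)) ≫ (α_ X' Y' Z').inv ≫ (s ⊗ₘ 𝟙 Z') ≫ (α_ U V Z').hom ≫ (𝟙 U ⊗ₘ t)
      = (α_ X Y Z).inv ≫ (((a ⊗ₘ b) ≫ s) ⊗ₘ 𝟙 Z) ≫ (α_ U V Z).hom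
        ≫ (𝟙 U ⊗ₘ ((𝟙 V ⊗ₘ c) ≫ t)) :=
  calc _ = (α_ X Y Z).inv ≫ (((a ⊗ₘ b) ≫ s) ⊗ₘ c) ≫ (α_ U V Z').hom ≫ (𝟙 U ⊗ₘ t) := by
        monoidal
    _ = _ := by
        rw [MonoidalCategory.tensorHom_def]
        monoidal

section Modules

variable {T : Monad C}

-- A reducible copy of `T.free.obj X`, so that its carrier unfolds to `T.obj X` when rewriting.
abbrev freeAlgebra (T : Monad C) (X : C) : T.Algebra :=
  ⟨T.obj X, T.μ.app X, T.left_unit X, (T.assoc X).symm⟩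

def actionHom (M : T.Algebra) : freeAlgebra T M.A ⟶ M where
  f := M.a
  h := M.assoc.symm

lemma unit_tensorHom_unit_comp_action (M N : T.Algebra) :
    (T.η.app M.A ⊗ₘ T.η.app N.A) ≫ (M.a ⊗ₘ N.a) = 𝟙 (M.A ⊗ N.A) := by
  rw [tensorHom_comp_tensorHom, M.unit, N.unit]
  exact id_tensorHom_id _ _

lemma mu_tensorHom_comp_action (M N : T.Algebra) :
    (T.μ.app M.A ⊗ₘ T.μ.app N.A) ≫ (M.a ⊗ₘ N.a) = (T.map M.a ⊗ₘ T.map N.a) ≫ (M.a ⊗ₘ N.a) := by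
  rw [tensorHom_comp_tensorHom, tensorHom_comp_tensorHom, M.assoc, N.assoc]

def braidingOfR (R : ∀ X Y : C, X ⊗ Y ⟶ T.obj Y ⊗ T.obj X) (M N : T.Algebra) :
    M.A ⊗ N.A ⟶ N.A ⊗ M.A :=
  R M.A N.A ≫ (N.a ⊗ₘ M.a)

def rOfBraiding (σ : ∀ M N : T.Algebra, M.A ⊗ N.A ⟶ N.A ⊗ M.A) (X Y : C) :
    X ⊗ Y ⟶ T.obj Y ⊗ T.obj X :=
  (T.η.app X ⊗ₘ T.η.app Y) ≫ σ (freeAlgebra T X) (freeAlgebra T Y)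

section NaturalFamily

variable {R : ∀ X Y : C, X ⊗ Y ⟶ T.obj Y ⊗ T.obj X}
  (hR : ∀ {X X' Y Y' : C} (f : X ⟶ X') (g : Y ⟶ Y'),
    (f ⊗ₘ g) ≫ R X' Y' = R X Y ≫ (T.map g ⊗ₘ T.map f))
include hR

lemma braidingOfR_natural {M M' N N' : T.Algebra} (f : M ⟶ M') (g : N ⟶ N') :
    (f.f ⊗ₘ g.f) ≫ braidingOfR R M' N' = braidingOfR R M N ≫ (g.f ⊗ₘ f.f) := by
  simp only [braidingOfR, reassoc_of% hR, tensorHom_comp_tensorHom, Monad.Algebra.Hom.h,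
    Category.assoc]

lemma action_tensorHom_comp_braidingOfR (M N : T.Algebra) :
    (M.a ⊗ₘ N.a) ≫ braidingOfR R M N
      = R (T.obj M.A) (T.obj N.A) ≫ (T.μ.app N.A ⊗ₘ T.μ.app M.A) ≫ (N.a ⊗ₘ M.a) :=
  (braidingOfR_natural hR (actionHom M) (actionHom N)).trans (Category.assoc _ _ _)

lemma R_obj_left_comp_action (M N : T.Algebra) :
    R (T.obj M.A) N.A ≫ (𝟙 _ ⊗ₘ T.μ.app M.A) ≫ (N.a ⊗ₘ M.a)
      = (M.a ⊗ₘ 𝟙 N.A) ≫ R M.A N.A ≫ (N.a ⊗ₘ M.a) := by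
  rw [reassoc_of% hR, CategoryTheory.Functor.map_id, tensorHom_comp_tensorHom,
    tensorHom_comp_tensorHom, M.assoc, Category.id_comp]

lemma R_obj_right_comp_action (M N : T.Algebra) :
    R M.A (T.obj N.A) ≫ (T.μ.app N.A ⊗ₘ 𝟙 _) ≫ (N.a ⊗ₘ M.a)
      = (𝟙 M.A ⊗ₘ N.a) ≫ R M.A N.A ≫ (N.a ⊗ₘ M.a) := by
  rw [reassoc_of% hR, CategoryTheory.Functor.map_id, tensorHom_comp_tensorHom,
    tensorHom_comp_tensorHom, N.assoc, Category.id_comp]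

lemma rOfBraiding_braidingOfR : rOfBraiding (braidingOfR R) = R := by
  funext X Y
  rw [rOfBraiding, braidingOfR, reassoc_of% hR, tensorHom_comp_tensorHom, T.right_unit,
    T.right_unit]
  simp

end NaturalFamily

lemma braidingOfR_comp_braidingOfR {R S : ∀ X Y : C, X ⊗ Y ⟶ T.obj Y ⊗ T.obj X}
    (hS : ∀ {X X' Y Y' : C} (f : X ⟶ X') (g : Y ⟶ Y'),
      (f ⊗ₘ g) ≫ S X' Y' = S X Y ≫ (T.map g ⊗ₘ T.map f))
    (hRS : ∀ X Y : C, R X Y ≫ S (T.obj Y) (T.obj X) ≫ (T.μ.app X ⊗ₘ T.μ.app Y)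
      = T.η.app X ⊗ₘ T.η.app Y) (M N : T.Algebra) :
    braidingOfR R M N ≫ braidingOfR S N M = 𝟙 (M.A ⊗ N.A) := by
  rw [braidingOfR, Category.assoc, action_tensorHom_comp_braidingOfR hS, reassoc_of% hRS,
    unit_tensorHom_unit_comp_action]

section RMatrix

variable {Q : Comonoidal T.toFunctor} (hB : IsBimonad T Q) {R : ∀ X Y : C, X ⊗ Y ⟶ T.obj Y ⊗ T.obj X}

lemma braidingOfR_linear (hR : IsRMatrix T Q R) (M N : T.Algebra) :
    (Q.δ M.A N.A ≫ (M.a ⊗ₘ N.a)) ≫ braidingOfR R M N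
      = T.map (braidingOfR R M N) ≫ Q.δ N.A M.A ≫ (N.a ⊗ₘ M.a) := by
  rw [Category.assoc, action_tensorHom_comp_braidingOfR hR.natural, reassoc_of% hR.rmat1,
    mu_tensorHom_comp_action, braidingOfR, Functor.map_comp, Category.assoc,
    reassoc_of% Q.δ_natural]

lemma braidingOfR_hexagon_left (hR : IsRMatrix T Q R) (M N P : T.Algebra) :
    braidingOfR R M (tensorAlgebra T Q hB N P)
      = (α_ M.A N.A P.A).inv ≫ (braidingOfR R M N ⊗ₘ 𝟙 P.A) ≫ (α_ N.A M.A P.A).hom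
        ≫ (𝟙 N.A ⊗ₘ braidingOfR R M P) ≫ (α_ N.A P.A M.A).inv := by
  have split : (Q.δ N.A P.A ≫ (N.a ⊗ₘ P.a)) ⊗ₘ M.a
      = (Q.δ N.A P.A ⊗ₘ 𝟙 _) ≫ ((N.a ⊗ₘ P.a) ⊗ₘ M.a) := by
    rw [tensorHom_comp_tensorHom, Category.id_comp]
  dsimp only [braidingOfR, tensorAlgebra]
  rw [split, reassoc_of% hR.rmat3, ← associator_inv_naturality, tensorHom_comp_tensorHom_assoc,
    Category.assoc, R_obj_left_comp_action hR.natural, Category.id_comp]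
  monoidal

lemma braidingOfR_hexagon_right (hR : IsRMatrix T Q R) (M N P : T.Algebra) :
    braidingOfR R (tensorAlgebra T Q hB M N) P
      = (α_ M.A N.A P.A).hom ≫ (𝟙 M.A ⊗ₘ braidingOfR R N P) ≫ (α_ M.A P.A N.A).inv
        ≫ (braidingOfR R M P ⊗ₘ 𝟙 N.A) ≫ (α_ P.A M.A N.A).hom := by
  have split : P.a ⊗ₘ (Q.δ M.A N.A ≫ (M.a ⊗ₘ N.a))
      = (𝟙 _ ⊗ₘ Q.δ M.A N.A) ≫ (P.a ⊗ₘ (M.a ⊗ₘ N.a)) := by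
    rw [tensorHom_comp_tensorHom, Category.id_comp]
  dsimp only [braidingOfR, tensorAlgebra]
  rw [split, reassoc_of% hR.rmat2, ← associator_naturality, tensorHom_comp_tensorHom_assoc,
    Category.assoc, R_obj_right_comp_action hR.natural, Category.id_comp]
  monoidal

theorem isBraidingOnModules_braidingOfR (hR : IsRMatrix T Q R) :
    IsBraidingOnModules T Q hB (braidingOfR R) := by
  obtain ⟨R', hR'_natural, hRR', hR'R⟩ := hR.invertible
  refine ⟨braidingOfR_natural hR.natural, braidingOfR_linear hR, fun M N => ?_,
    braidingOfR_hexagon_left hB hR, braidingOfR_hexagon_right hB hR⟩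
  exact ⟨braidingOfR (fun Y X => R' X Y) N M,
    braidingOfR_comp_braidingOfR (fun g f => hR'_natural f g) hRR' M N,
    braidingOfR_comp_braidingOfR hR.natural (fun X Y => hR'R Y X) N M⟩

def deltaHom (X Y : C) :
    freeAlgebra T (X ⊗ Y) ⟶ tensorAlgebra T Q hB (freeAlgebra T X) (freeAlgebra T Y) where
  f := Q.δ X Y
  h := (hB.mu_δ X Y).symm

end RMatrix

section NaturalOnModules

variable {σ : ∀ M N : T.Algebra, M.A ⊗ N.A ⟶ N.A ⊗ M.A}
  (hσ : ∀ {M M' N N' : T.Algebra} (f : M ⟶ M') (g : N ⟶ N'),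
    (f.f ⊗ₘ g.f) ≫ σ M' N' = σ M N ≫ (g.f ⊗ₘ f.f))
include hσ

lemma rOfBraiding_natural {X X' Y Y' : C} (f : X ⟶ X') (g : Y ⟶ Y') :
    (f ⊗ₘ g) ≫ rOfBraiding σ X' Y' = rOfBraiding σ X Y ≫ (T.map g ⊗ₘ T.map f) := by
  have hf : f ≫ T.η.app X' = T.η.app X ≫ T.map f := T.η.naturality f
  have hg : g ≫ T.η.app Y' = T.η.app Y ≫ T.map g := T.η.naturality g
  simp only [rOfBraiding]
  rw [← Category.assoc, tensorHom_comp_tensorHom, hf, hg, ← tensorHom_comp_tensorHom,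
    Category.assoc, Category.assoc]
  exact congrArg _ (hσ (T.free.map f) (T.free.map g))

lemma braidingOfR_rOfBraiding (M N : T.Algebra) :
    braidingOfR (rOfBraiding σ) M N = σ M N := by
  have h : (M.a ⊗ₘ N.a) ≫ σ M N = σ (freeAlgebra T M.A) (freeAlgebra T N.A) ≫ (N.a ⊗ₘ M.a) :=
    hσ (actionHom M) (actionHom N)
  rw [braidingOfR, rOfBraiding, Category.assoc, ← h, ← Category.assoc,
    unit_tensorHom_unit_comp_action, Category.id_comp]

lemma rOfBraiding_obj_comp_mu (X Y : C) :
    rOfBraiding σ (T.obj X) (T.obj Y) ≫ (T.μ.app Y ⊗ₘ T.μ.app X)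
      = σ (freeAlgebra T X) (freeAlgebra T Y) :=
  braidingOfR_rOfBraiding hσ (freeAlgebra T X) (freeAlgebra T Y)

lemma rOfBraiding_comp_mu_tensorHom_id (X Z : C) :
    rOfBraiding σ X (T.obj Z) ≫ (T.μ.app Z ⊗ₘ 𝟙 (T.obj X))
      = (T.η.app X ⊗ₘ 𝟙 (T.obj Z)) ≫ σ (freeAlgebra T X) (freeAlgebra T Z) := by
  have h : (𝟙 (T.obj X) ⊗ₘ T.μ.app Z) ≫ σ (freeAlgebra T X) (freeAlgebra T Z)
      = σ (freeAlgebra T X) (freeAlgebra T (T.obj Z)) ≫ (T.μ.app Z ⊗ₘ 𝟙 (T.obj X)) :=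
    hσ (𝟙 (freeAlgebra T X)) (actionHom (freeAlgebra T Z))
  rw [rOfBraiding, Category.assoc, ← h, ← Category.assoc, tensorHom_comp_tensorHom, T.left_unit,
    Category.comp_id]
  rfl

lemma rOfBraiding_comp_id_tensorHom_mu (X Z : C) :
    rOfBraiding σ (T.obj X) Z ≫ (𝟙 (T.obj Z) ⊗ₘ T.μ.app X)
      = (𝟙 (T.obj X) ⊗ₘ T.η.app Z) ≫ σ (freeAlgebra T X) (freeAlgebra T Z) := by
  have h : (T.μ.app X ⊗ₘ 𝟙 (T.obj Z)) ≫ σ (freeAlgebra T X) (freeAlgebra T Z)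
      = σ (freeAlgebra T (T.obj X)) (freeAlgebra T Z) ≫ (𝟙 (T.obj Z) ⊗ₘ T.μ.app X) :=
    hσ (actionHom (freeAlgebra T X)) (𝟙 (freeAlgebra T Z))
  rw [rOfBraiding, Category.assoc, ← h, ← Category.assoc, tensorHom_comp_tensorHom, T.left_unit,
    Category.comp_id]
  rfl

lemma inv_natural [∀ M N : T.Algebra, IsIso (σ M N)] {N N' M M' : T.Algebra} (f : N ⟶ N')
    (g : M ⟶ M') : (f.f ⊗ₘ g.f) ≫ inv (σ M' N') = inv (σ M N) ≫ (g.f ⊗ₘ f.f) := by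
  rw [IsIso.comp_inv_eq, Category.assoc, hσ, IsIso.inv_hom_id_assoc]

variable {Q : Comonoidal T.toFunctor} (hB : IsBimonad T Q)

lemma rOfBraiding_tensor_left_comp_delta (X Y Z : C) :
    rOfBraiding σ (X ⊗ Y) Z ≫ (𝟙 (T.obj Z) ⊗ₘ Q.δ X Y)
      = ((T.η.app X ⊗ₘ T.η.app Y) ⊗ₘ T.η.app Z)
        ≫ σ (tensorAlgebra T Q hB (freeAlgebra T X) (freeAlgebra T Y)) (freeAlgebra T Z) := by
  have h : (Q.δ X Y ⊗ₘ 𝟙 (T.obj Z))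
        ≫ σ (tensorAlgebra T Q hB (freeAlgebra T X) (freeAlgebra T Y)) (freeAlgebra T Z)
      = σ (freeAlgebra T (X ⊗ Y)) (freeAlgebra T Z) ≫ (𝟙 (T.obj Z) ⊗ₘ Q.δ X Y) :=
    hσ (deltaHom hB X Y) (𝟙 (freeAlgebra T Z))
  have hη : (T.η.app (X ⊗ Y) ⊗ₘ T.η.app Z) ≫ (Q.δ X Y ⊗ₘ 𝟙 (T.obj Z))
      = (T.η.app X ⊗ₘ T.η.app Y) ⊗ₘ T.η.app Z := by
    rw [tensorHom_comp_tensorHom, hB.eta_δ, Category.comp_id]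
  rw [rOfBraiding, Category.assoc, ← h]
  exact (reassoc_of% hη) _

lemma rOfBraiding_tensor_right_comp_delta (X Y Z : C) :
    rOfBraiding σ X (Y ⊗ Z) ≫ (Q.δ Y Z ⊗ₘ 𝟙 (T.obj X))
      = (T.η.app X ⊗ₘ (T.η.app Y ⊗ₘ T.η.app Z))
        ≫ σ (freeAlgebra T X) (tensorAlgebra T Q hB (freeAlgebra T Y) (freeAlgebra T Z)) := by
  have h : (𝟙 (T.obj X) ⊗ₘ Q.δ Y Z)
        ≫ σ (freeAlgebra T X) (tensorAlgebra T Q hB (freeAlgebra T Y) (freeAlgebra T Z))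
      = σ (freeAlgebra T X) (freeAlgebra T (Y ⊗ Z)) ≫ (Q.δ Y Z ⊗ₘ 𝟙 (T.obj X)) :=
    hσ (𝟙 (freeAlgebra T X)) (deltaHom hB Y Z)
  have hη : (T.η.app X ⊗ₘ T.η.app (Y ⊗ Z)) ≫ (𝟙 (T.obj X) ⊗ₘ Q.δ Y Z)
      = T.η.app X ⊗ₘ (T.η.app Y ⊗ₘ T.η.app Z) := by
    rw [tensorHom_comp_tensorHom, hB.eta_δ, Category.comp_id]
  rw [rOfBraiding, Category.assoc, ← h]
  exact (reassoc_of% hη) _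

end NaturalOnModules

section Braiding

variable {Q : Comonoidal T.toFunctor} {hB : IsBimonad T Q}
  {τ : ∀ M N : T.Algebra, M.A ⊗ N.A ⟶ N.A ⊗ M.A} (hτ : IsBraidingOnModules T Q hB τ)
include hτ

lemma rOfBraiding_rmat1 (X Y : C) :
    Q.δ X Y ≫ rOfBraiding τ (T.obj X) (T.obj Y) ≫ (T.μ.app Y ⊗ₘ T.μ.app X)
      = T.map (rOfBraiding τ X Y) ≫ Q.δ (T.obj Y) (T.obj X) ≫ (T.μ.app Y ⊗ₘ T.μ.app X) := by
  rw [rOfBraiding_obj_comp_mu hτ.natural, rOfBraiding, Functor.map_comp, Category.assoc,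
    ← hτ.linear (freeAlgebra T X) (freeAlgebra T Y), Category.assoc, reassoc_of% Q.δ_natural,
    tensorHom_comp_tensorHom_assoc, T.right_unit, T.right_unit]
  simp

lemma rOfBraiding_rmat2 (X Y Z : C) :
    rOfBraiding τ (X ⊗ Y) Z ≫ (𝟙 (T.obj Z) ⊗ₘ Q.δ X Y)
      = (α_ X Y Z).hom ≫ (𝟙 X ⊗ₘ rOfBraiding τ Y Z) ≫ (α_ X (T.obj Z) (T.obj Y)).inv
        ≫ ((rOfBraiding τ X (T.obj Z) ≫ (T.μ.app Z ⊗ₘ 𝟙 (T.obj X))) ⊗ₘ 𝟙 (T.obj Y))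
        ≫ (α_ (T.obj Z) (T.obj X) (T.obj Y)).hom := by
  rw [rOfBraiding_tensor_left_comp_delta hτ.natural hB,
    rOfBraiding_comp_mu_tensorHom_id hτ.natural, hτ.hex2, rOfBraiding]
  exact (reassoc_of% (associator_hom_exchange (T.η.app X) (T.η.app Y) (T.η.app Z) _ _)) _

lemma rOfBraiding_rmat3 (X Y Z : C) :
    rOfBraiding τ X (Y ⊗ Z) ≫ (Q.δ Y Z ⊗ₘ 𝟙 (T.obj X))
      = (α_ X Y Z).inv ≫ (rOfBraiding τ X Y ⊗ₘ 𝟙 Z) ≫ (α_ (T.obj Y) (T.obj X) Z).hom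
        ≫ (𝟙 (T.obj Y) ⊗ₘ (rOfBraiding τ (T.obj X) Z ≫ (𝟙 (T.obj Z) ⊗ₘ T.μ.app X)))
        ≫ (α_ (T.obj Y) (T.obj Z) (T.obj X)).inv := by
  rw [rOfBraiding_tensor_right_comp_delta hτ.natural hB,
    rOfBraiding_comp_id_tensorHom_mu hτ.natural, hτ.hex1, rOfBraiding]
  exact (reassoc_of% (associator_inv_exchange (T.η.app X) (T.η.app Y) (T.η.app Z) _ _)) _

theorem isRMatrix_rOfBraiding : IsRMatrix T Q (rOfBraiding τ) := by
  have := hτ.iso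
  refine ⟨rOfBraiding_natural hτ.natural,
    ⟨fun X Y => rOfBraiding (fun N M => inv (τ M N)) Y X,
      fun f g => rOfBraiding_natural (inv_natural hτ.natural) g f, fun X Y => ?_, fun X Y => ?_⟩,
    rOfBraiding_rmat1 hτ, rOfBraiding_rmat2 hτ, rOfBraiding_rmat3 hτ⟩
  · rw [rOfBraiding_obj_comp_mu (inv_natural hτ.natural), rOfBraiding, Category.assoc,
      IsIso.hom_inv_id, Category.comp_id]
  · dsimp only
    rw [rOfBraiding_obj_comp_mu hτ.natural, rOfBraiding, Category.assoc, IsIso.inv_hom_id,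
      Category.comp_id]

end Braiding

end Modules

/-- For a bimonad `T` on a monoidal category, any R-matrix `R`
induces a braiding on the category of `T`-modules by
`τ_{(M,r),(N,s)} = (s ⊗ r) ∘ R_{M,N}`, and this assignment is a bijection between
R-matrices for `T` and braidings on `T`-Mod. -/
theorem stmt19 (T : Monad C) (Q : Comonoidal T.toFunctor) (hB : IsBimonad T Q) :
    (∀ R : ∀ X Y : C, X ⊗ Y ⟶ T.obj Y ⊗ T.obj X, IsRMatrix T Q R →
      IsBraidingOnModules T Q hB (fun M N => R M.A N.A ≫ (N.a ⊗ₘ M.a))) ∧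
    (∀ τ : ∀ M N : T.Algebra, M.A ⊗ N.A ⟶ N.A ⊗ M.A,
      IsBraidingOnModules T Q hB τ →
      ∃! R : ∀ X Y : C, X ⊗ Y ⟶ T.obj Y ⊗ T.obj X,
        IsRMatrix T Q R ∧ ∀ M N : T.Algebra, τ M N = R M.A N.A ≫ (N.a ⊗ₘ M.a)) := by
  refine ⟨fun R hR => isBraidingOnModules_braidingOfR hB hR, fun τ hτ => ?_⟩
  refine ⟨rOfBraiding τ, ⟨isRMatrix_rOfBraiding hτ,
    fun M N => (braidingOfR_rOfBraiding hτ.natural M N).symm⟩, ?_⟩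
  rintro R ⟨hR, hτ_eq⟩
  rw [show τ = braidingOfR R from funext₂ hτ_eq, rOfBraiding_braidingOfR hR.natural]

end HopfMonadPaper
end
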